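/- Let 0 ≤ δ < 1, 0 < C < 1 and 0 < B ≤ 1/C, and for each n (sufficiently large) let Z^{(n)} = (z^{(n)}_{ij}) be a typical table for the margins of M_{n,δ}(B,C). Then limsup_{n→∞} z^{(n)}_{11} ≤ B²C. -/

import Mathlib

open Finset Filter

/-- The binary transportation polytope: `m × n` real matrices with entries in `[0,1]`,
row sums `r` and column sums `c`. -/
def P01 {m n : ℕ} (r : Fin m → ℕ) (c : Fin n → ℕ) : Set (Fin m → Fin n → ℝ) :=
  {Z | (∀ i j, 0 ≤ Z i j ∧ Z i j ≤ 1) ∧ (∀ i, ∑ j, Z i j = (r i : ℝ)) ∧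
    (∀ j, ∑ i, Z i j = (c j : ℝ))}

/-- The Bernoulli entropy functional
`g(Z) = ∑_{i,j} z_{ij} ln(1/z_{ij}) + (1 - z_{ij}) ln(1/(1 - z_{ij}))`. -/
noncomputable def entG {m n : ℕ} (Z : Fin m → Fin n → ℝ) : ℝ :=
  ∑ i, ∑ j, (Z i j * Real.log (1 / Z i j) + (1 - Z i j) * Real.log (1 / (1 - Z i j)))

/-- `Z` is a typical table for the margins `(r, c)`: it has all entries in `(0,1)`,
lies in the binary transportation polytope, and maximizes `g` among all matrices in the
polytope with entries in `(0,1)`. -/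
def IsTypicalTable {m n : ℕ} (r : Fin m → ℕ) (c : Fin n → ℕ)
    (Z : Fin m → Fin n → ℝ) : Prop :=
  (∀ i j, 0 < Z i j ∧ Z i j < 1) ∧ Z ∈ P01 r c ∧
    ∀ W ∈ P01 r c, (∀ i j, 0 < W i j ∧ W i j < 1) → entG W ≤ entG Z

/-- The margins of `BCT n δ B C`: the first `⌊n^δ⌋` entries equal `⌊BCn⌋` and the
remaining `n` entries equal `⌊Cn⌋`. -/
noncomputable def marg (n : ℕ) (δ B C : ℝ) : Fin (⌊(n : ℝ) ^ δ⌋₊ + n) → ℕ :=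
  fun i => if i.1 < ⌊(n : ℝ) ^ δ⌋₊ then ⌊B * C * (n : ℝ)⌋₊ else ⌊C * (n : ℝ)⌋₊

/-- Entry of a square real matrix at 0-based natural indices, with junk value `0`
out of range. -/
def entR {N : ℕ} (Z : Fin N → Fin N → ℝ) (a b : ℕ) : ℝ :=
  if h : a < N ∧ b < N then Z ⟨a, h.1⟩ ⟨b, h.2⟩ else 0

lemma entG_eq {m n : ℕ} (Z : Fin m → Fin n → ℝ) :
    entG Z = ∑ i, ∑ j, Real.binEntropy (Z i j) := by
  simp [entG, Real.binEntropy, one_div]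

/-- Uniqueness of the typical table. -/
lemma typicalTable_unique {m n : ℕ} {r : Fin m → ℕ} {c : Fin n → ℕ}
    {Z W : Fin m → Fin n → ℝ} (hZ : IsTypicalTable r c Z) (hW : IsTypicalTable r c W) :
    Z = W := by
  by_contra hne
  replace hne : ∃ i j, Z i j ≠ W i j := by
    simpa [Function.ne_iff] using hne
  obtain ⟨i₀, j₀, hne⟩ := hne
  set M : Fin m → Fin n → ℝ := fun i j => (Z i j + W i j) / 2 with hM
  have hZb := hZ.1
  have hWb := hW.1
  have hMb : ∀ i j, 0 < M i j ∧ M i j < 1 := by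
    intro i j
    have h1 := hZb i j; have h2 := hWb i j
    constructor <;> simp only [hM] <;> [linarith [h1.1, h2.1]; linarith [h1.2, h2.2]]
  have hMmem : M ∈ P01 r c := by
    refine ⟨fun i j => ⟨(hMb i j).1.le, (hMb i j).2.le⟩, fun i => ?_, fun j => ?_⟩
    · simp only [hM, ← Finset.sum_div, Finset.sum_add_distrib, hZ.2.1.2.1 i, hW.2.1.2.1 i]
      ring
    · simp only [hM, ← Finset.sum_div, Finset.sum_add_distrib, hZ.2.1.2.2 j, hW.2.1.2.2 j]
      ring
  -- pointwise concavity
  have key : ∀ i j, (Real.binEntropy (Z i j) + Real.binEntropy (W i j)) / 2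
      ≤ Real.binEntropy (M i j) := by
    intro i j
    have h1 := hZb i j; have h2 := hWb i j
    rcases eq_or_ne (Z i j) (W i j) with h | h
    · simp [hM, h]
    · have := Real.strictConcave_binEntropy.2 (Set.mem_Icc.2 ⟨h1.1.le, h1.2.le⟩)
        (Set.mem_Icc.2 ⟨h2.1.le, h2.2.le⟩) h (by norm_num : (0:ℝ) < 1/2)
        (by norm_num : (0:ℝ) < 1/2) (by norm_num)
      simp only [smul_eq_mul] at this
      have heq : (1:ℝ)/2 * Z i j + 1/2 * W i j = M i j := by simp [hM]; ring
      rw [heq] at this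
      linarith
  have keystrict : (Real.binEntropy (Z i₀ j₀) + Real.binEntropy (W i₀ j₀)) / 2
      < Real.binEntropy (M i₀ j₀) := by
    have h1 := hZb i₀ j₀; have h2 := hWb i₀ j₀
    have := Real.strictConcave_binEntropy.2 (Set.mem_Icc.2 ⟨h1.1.le, h1.2.le⟩)
      (Set.mem_Icc.2 ⟨h2.1.le, h2.2.le⟩) hne (by norm_num : (0:ℝ) < 1/2)
      (by norm_num : (0:ℝ) < 1/2) (by norm_num)
    simp only [smul_eq_mul] at this
    have heq : (1:ℝ)/2 * Z i₀ j₀ + 1/2 * W i₀ j₀ = M i₀ j₀ := by simp [hM]; ring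
    rw [heq] at this
    linarith
  have hEW : entG W = entG Z :=
    le_antisymm (hZ.2.2 W hW.2.1 hW.1) (hW.2.2 Z hZ.2.1 hZ.1)
  have hlt : entG Z < entG M := by
    rw [entG_eq, entG_eq] at *
    have : ∑ i, ∑ j, (Real.binEntropy (Z i j) + Real.binEntropy (W i j)) / 2
        < ∑ i, ∑ j, Real.binEntropy (M i j) := by
      apply Finset.sum_lt_sum
      · intro i _
        exact Finset.sum_le_sum fun j _ => key i j
      · exact ⟨i₀, Finset.mem_univ _, Finset.sum_lt_sum
          (fun j _ => key i₀ j) ⟨j₀, Finset.mem_univ _, keystrict⟩⟩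
    have e1 : ∑ i, ∑ j, (Real.binEntropy (Z i j) + Real.binEntropy (W i j)) / 2
        = (∑ i, ∑ j, Real.binEntropy (Z i j) + ∑ i, ∑ j, Real.binEntropy (W i j)) / 2 := by
      simp [Finset.sum_add_distrib, ← Finset.sum_div]
    rw [e1, hEW] at this
    linarith
  exact absurd (hZ.2.2 M hMmem hMb) (not_le.2 hlt)

/-- Invariance under a column permutation preserving the margins. -/
lemma typicalTable_col_perm {m n : ℕ} {r : Fin m → ℕ} {c : Fin n → ℕ}
    {Z : Fin m → Fin n → ℝ} (hZ : IsTypicalTable r c Z) (σ : Equiv.Perm (Fin n))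
    (hσ : ∀ j, c (σ j) = c j) (i : Fin m) (j : Fin n) : Z i (σ j) = Z i j := by
  have hent : entG (fun i j => Z i (σ j)) = entG Z := by
    unfold entG
    refine Finset.sum_congr rfl fun i _ => ?_
    exact Equiv.sum_comp σ (fun j => Z i j * Real.log (1 / Z i j) + (1 - Z i j) * Real.log (1 / (1 - Z i j)))
  have hT : IsTypicalTable r c (fun i j => Z i (σ j)) := by
    refine ⟨fun i j => hZ.1 i (σ j), ⟨fun i j => hZ.2.1.1 i (σ j), fun i => ?_, fun j => ?_⟩,
      fun W hW hWb => (hZ.2.2 W hW hWb).trans hent.ge⟩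
    · rw [Equiv.sum_comp σ (Z i)]; exact hZ.2.1.2.1 i
    · rw [hZ.2.1.2.2 (σ j), hσ j]
  have := typicalTable_unique hT hZ
  exact congrFun (congrFun this i) j

/-- A typical table with equal row and column margins is symmetric. -/
lemma typicalTable_symm {n : ℕ} {c : Fin n → ℕ} {Z : Fin n → Fin n → ℝ}
    (hZ : IsTypicalTable c c Z) (i j : Fin n) : Z j i = Z i j := by
  have hent : entG (fun i j => Z j i) = entG Z := by
    unfold entG
    exact Finset.sum_comm
  have hT : IsTypicalTable c c (fun i j => Z j i) := by
    refine ⟨fun i j => hZ.1 j i, ⟨fun i j => hZ.2.1.1 j i, fun i => hZ.2.1.2.2 i,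
      fun j => hZ.2.1.2.1 j⟩, fun W hW hWb => (hZ.2.2 W hW hWb).trans hent.ge⟩
  have := typicalTable_unique hT hZ
  exact congrFun (congrFun this i) j

/-- Helper: summing against a difference of indicators. -/
lemma sum_mul_indicator_sub {k : ℕ} (a b : Fin k) (g : Fin k → ℝ) :
    ∑ j, g j * ((if j = a then (1:ℝ) else 0) - (if j = b then 1 else 0)) = g a - g b := by
  simp [mul_sub, mul_ite, Finset.sum_sub_distrib]

/-- First-order optimality along a 2×2 cycle for a typical table. -/
lemma typicalTable_cycle {m n : ℕ} {r : Fin m → ℕ} {c : Fin n → ℕ}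
    {Z : Fin m → Fin n → ℝ} (hZ : IsTypicalTable r c Z)
    (i₀ i₁ : Fin m) (j₀ j₁ : Fin n) :
    (1 - Z i₀ j₀) / Z i₀ j₀ * ((1 - Z i₁ j₁) / Z i₁ j₁)
      = (1 - Z i₀ j₁) / Z i₀ j₁ * ((1 - Z i₁ j₀) / Z i₁ j₀) := by
  rcases eq_or_ne i₀ i₁ with rfl | hi
  · ring
  rcases eq_or_ne j₀ j₁ with rfl | hj
  · ring
  set A : Fin m → ℝ := fun i => (if i = i₀ then (1:ℝ) else 0) - (if i = i₁ then 1 else 0) with hA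
  set B : Fin n → ℝ := fun j => (if j = j₀ then (1:ℝ) else 0) - (if j = j₁ then 1 else 0) with hB
  set E : Fin m → Fin n → ℝ := fun i j => A i * B j with hE
  have hEabs : ∀ i j, |E i j| ≤ 1 := by
    intro i j
    simp only [hE, hA, hB]
    split_ifs <;> norm_num
  have hEsupp : ∀ i j, E i j ≠ 0 → ((i = i₀ ∨ i = i₁) ∧ (j = j₀ ∨ j = j₁)) := by
    intro i j h
    simp only [hE, hA, hB] at h
    split_ifs at h <;> simp_all
  have hZb := hZ.1
  set ε : ℝ := min (min (min (Z i₀ j₀) (1 - Z i₀ j₀)) (min (Z i₀ j₁) (1 - Z i₀ j₁)))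
      (min (min (Z i₁ j₀) (1 - Z i₁ j₀)) (min (Z i₁ j₁) (1 - Z i₁ j₁))) with hε
  have hε0 : 0 < ε := by
    have h00 := hZb i₀ j₀; have h01 := hZb i₀ j₁
    have h10 := hZb i₁ j₀; have h11 := hZb i₁ j₁
    simp only [hε, lt_min_iff]
    refine ⟨⟨⟨h00.1, by linarith [h00.2]⟩, ⟨h01.1, by linarith [h01.2]⟩⟩,
      ⟨⟨h10.1, by linarith [h10.2]⟩, ⟨h11.1, by linarith [h11.2]⟩⟩⟩
  have hεle : ∀ i j, (i = i₀ ∨ i = i₁) → (j = j₀ ∨ j = j₁) →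
      ε ≤ Z i j ∧ ε ≤ 1 - Z i j := by
    rintro i j (rfl | rfl) (rfl | rfl) <;>
      constructor <;> simp only [hε] <;>
      [exact (min_le_left _ _).trans ((min_le_left _ _).trans (min_le_left _ _));
       exact (min_le_left _ _).trans ((min_le_left _ _).trans (min_le_right _ _));
       exact (min_le_left _ _).trans ((min_le_right _ _).trans (min_le_left _ _));
       exact (min_le_left _ _).trans ((min_le_right _ _).trans (min_le_right _ _));
       exact (min_le_right _ _).trans ((min_le_left _ _).trans (min_le_left _ _));
       exact (min_le_right _ _).trans ((min_le_left _ _).trans (min_le_right _ _));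
       exact (min_le_right _ _).trans ((min_le_right _ _).trans (min_le_left _ _));
       exact (min_le_right _ _).trans ((min_le_right _ _).trans (min_le_right _ _))]
  -- entries of the perturbed matrix stay in (0,1)
  have hentry : ∀ t : ℝ, |t| < ε → ∀ i j, 0 < Z i j + t * E i j ∧ Z i j + t * E i j < 1 := by
    intro t ht i j
    rcases eq_or_ne (E i j) 0 with h0 | h0
    · simpa [h0] using hZb i j
    · obtain ⟨hi', hj'⟩ := hEsupp i j h0
      obtain ⟨he1, he2⟩ := hεle i j hi' hj'
      have : |t * E i j| ≤ |t| := by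
        rw [abs_mul]
        calc |t| * |E i j| ≤ |t| * 1 := by
              exact mul_le_mul_of_nonneg_left (hEabs i j) (abs_nonneg t)
          _ = |t| := mul_one _
      have h1 : -(|t|) ≤ t * E i j := neg_abs_le _ |>.trans' (by linarith [neg_le_neg this, neg_abs_le (t * E i j)])
      have h2 : t * E i j ≤ |t| := (le_abs_self _).trans this
      constructor <;> nlinarith [abs_nonneg t]
  -- membership in the polytope
  have hBsum : ∑ j, B j = 0 := by
    simp only [hB, Finset.sum_sub_distrib]
    simp
  have hAsum : ∑ i, A i = 0 := by
    simp only [hA, Finset.sum_sub_distrib]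
    simp
  have hmem : ∀ t : ℝ, |t| < ε → (fun i j => Z i j + t * E i j) ∈ P01 r c := by
    intro t ht
    refine ⟨fun i j => ⟨(hentry t ht i j).1.le, (hentry t ht i j).2.le⟩, fun i => ?_, fun j => ?_⟩
    · rw [Finset.sum_add_distrib, hZ.2.1.2.1 i]
      have : ∑ j, t * E i j = t * A i * ∑ j, B j := by
        rw [Finset.mul_sum]
        exact Finset.sum_congr rfl fun j _ => by simp only [hE]; ring
      rw [this, hBsum]; ring
    · rw [Finset.sum_add_distrib, hZ.2.1.2.2 j]
      have : ∑ i, t * E i j = t * B j * ∑ i, A i := by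
        rw [Finset.mul_sum]
        exact Finset.sum_congr rfl fun i _ => by simp only [hE]; ring
      rw [this, hAsum]; ring
  -- the function φ
  set φ : ℝ → ℝ := fun t => ∑ i, ∑ j, Real.binEntropy (Z i j + t * E i j) with hφ
  have hφent : ∀ t, φ t = entG (fun i j => Z i j + t * E i j) := by
    intro t; rw [entG_eq]
  have hlocal : IsLocalMax φ 0 := by
    have hnhds : Set.Ioo (-ε) ε ∈ nhds (0:ℝ) := Ioo_mem_nhds (by linarith) hε0
    filter_upwards [hnhds] with t ht
    have habs : |t| < ε := abs_lt.2 ⟨ht.1, ht.2⟩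
    have h0 : φ 0 = entG Z := by
      rw [hφent]; congr 1; funext i j; ring
    rw [hφent, h0]
    exact hZ.2.2 _ (hmem t habs) (fun i j => hentry t habs i j)
  -- derivative of φ at 0
  set L : ℝ → ℝ := fun x => Real.log (1 - x) - Real.log x with hL
  have hderiv : HasDerivAt φ (∑ i, ∑ j, L (Z i j) * E i j) 0 := by
    apply HasDerivAt.fun_sum
    intro i _
    apply HasDerivAt.fun_sum
    intro j _
    have hinner : HasDerivAt (fun t : ℝ => Z i j + t * E i j) (E i j) 0 :=
      (hasDerivAt_mul_const (E i j)).const_add (Z i j)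
    have hb : HasDerivAt Real.binEntropy (L (Z i j)) (Z i j + 0 * E i j) := by
      rw [zero_mul, add_zero]
      exact Real.hasDerivAt_binEntropy (hZb i j).1.ne' (hZb i j).2.ne
    exact hb.comp 0 hinner
  have hD0 : ∑ i, ∑ j, L (Z i j) * E i j = 0 := by
    rw [← hderiv.deriv]
    exact hlocal.deriv_eq_zero
  -- compute the sum
  have hcompute : ∑ i, ∑ j, L (Z i j) * E i j
      = (L (Z i₀ j₀) - L (Z i₀ j₁)) - (L (Z i₁ j₀) - L (Z i₁ j₁)) := by
    have hrow : ∀ i, ∑ j, L (Z i j) * E i j = A i * (L (Z i j₀) - L (Z i j₁)) := by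
      intro i
      rw [show A i * (L (Z i j₀) - L (Z i j₁))
          = ∑ j, (fun j => A i * L (Z i j)) j * ((if j = j₀ then (1:ℝ) else 0)
            - (if j = j₁ then 1 else 0)) from by
        rw [sum_mul_indicator_sub j₀ j₁ (fun j => A i * L (Z i j))]; ring]
      exact Finset.sum_congr rfl fun j _ => by simp only [hE, hB]; ring
    calc ∑ i, ∑ j, L (Z i j) * E i j = ∑ i, A i * (L (Z i j₀) - L (Z i j₁)) :=
          Finset.sum_congr rfl fun i _ => hrow i
      _ = (L (Z i₀ j₀) - L (Z i₀ j₁)) - (L (Z i₁ j₀) - L (Z i₁ j₁)) := by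
          rw [show ∑ i, A i * (L (Z i j₀) - L (Z i j₁))
              = ∑ i, (fun i => L (Z i j₀) - L (Z i j₁)) i * ((if i = i₀ then (1:ℝ) else 0)
                - (if i = i₁ then 1 else 0)) from
            Finset.sum_congr rfl fun i _ => by simp only [hA]; ring]
          rw [sum_mul_indicator_sub i₀ i₁ (fun i => L (Z i j₀) - L (Z i j₁))]
  -- exponentiate
  have hlog : L (Z i₀ j₀) + L (Z i₁ j₁) = L (Z i₀ j₁) + L (Z i₁ j₀) := by
    rw [hcompute] at hD0; linarith
  have hratio : ∀ i j, L (Z i j) = Real.log ((1 - Z i j) / Z i j) := by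
    intro i j
    rw [hL, Real.log_div (by linarith [(hZb i j).2]) (hZb i j).1.ne']
  have hpos : ∀ i j, 0 < (1 - Z i j) / Z i j := fun i j =>
    div_pos (by linarith [(hZb i j).2]) (hZb i j).1
  have := hlog
  rw [hratio, hratio, hratio, hratio, ← Real.log_mul (hpos i₀ j₀).ne' (hpos i₁ j₁).ne',
    ← Real.log_mul (hpos i₀ j₁).ne' (hpos i₁ j₀).ne'] at this
  have := Real.log_injOn_pos (Set.mem_Ioi.2 (mul_pos (hpos i₀ j₀) (hpos i₁ j₁)))
    (Set.mem_Ioi.2 (mul_pos (hpos i₀ j₁) (hpos i₁ j₀))) this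
  exact this

set_option maxHeartbeats 1000000 in
/-- The key per-`n` estimate, with a generic top-block size `m`. -/
lemma main_est (B C : ℝ) (hC0 : 0 < C) (hC1 : C < 1)
    (hB0 : 0 < B) (hBC1 : B * C < 1) (m n : ℕ) (hm1 : 1 ≤ m) (hn1 : 1 ≤ n)
    (Zn : Fin (m + n) → Fin (m + n) → ℝ)
    (hZn : IsTypicalTable
      (fun i : Fin (m + n) => if i.1 < m then ⌊B * C * (n:ℝ)⌋₊ else ⌊C * (n:ℝ)⌋₊)
      (fun i : Fin (m + n) => if i.1 < m then ⌊B * C * (n:ℝ)⌋₊ else ⌊C * (n:ℝ)⌋₊) Zn)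
    (hsn : 0 < (C * n - 1 - (m : ℝ)) / n) :
    entR Zn 0 0 ≤ 1 / (1 + ((1 - B * C) / (B * C)) ^ 2 *
      ((C * n - 1 - (m : ℝ)) / n / (1 - (C * n - 1 - (m : ℝ)) / n))) := by
  set marg2 : Fin (m + n) → ℕ :=
    fun i : Fin (m + n) => if i.1 < m then ⌊B * C * (n:ℝ)⌋₊ else ⌊C * (n:ℝ)⌋₊ with hmarg2
  set sn : ℝ := (C * n - 1 - (m : ℝ)) / n with hsndef
  have hn0 : (0:ℝ) < n := by exact_mod_cast hn1
  set i0 : Fin (m + n) := ⟨0, by omega⟩ with hi0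
  set i1 : Fin (m + n) := ⟨m, by omega⟩ with hi1
  have hmargbot : ∀ j : Fin (m + n), m ≤ j.1 → marg2 j = ⌊C * (n:ℝ)⌋₊ := by
    intro j hj
    simp only [hmarg2]
    rw [if_neg (by omega)]
  have hmarg0 : marg2 i0 = ⌊B * C * (n:ℝ)⌋₊ := by
    simp only [hmarg2, hi0]
    rw [if_pos (by omega)]
  -- column constancy on bottom block
  have hq : ∀ j : Fin (m + n), m ≤ j.1 → ∀ i, Zn i j = Zn i i1 := by
    intro j hj i
    rcases eq_or_ne j i1 with rfl | hne
    · rfl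
    set σ : Equiv.Perm (Fin (m + n)) := Equiv.swap i1 j with hσdef
    have hσ : ∀ j', marg2 (σ j') = marg2 j' := by
      intro j'
      rcases eq_or_ne j' i1 with rfl | h1
      · rw [hσdef, Equiv.swap_apply_left, hmargbot j hj, hmargbot i1 (le_refl m)]
      rcases eq_or_ne j' j with rfl | h2
      · rw [hσdef, Equiv.swap_apply_right, hmargbot j' hj, hmargbot i1 (le_refl m)]
      · rw [hσdef, Equiv.swap_apply_of_ne_of_ne h1 h2]
    have := typicalTable_col_perm hZn σ hσ i i1
    rwa [hσdef, Equiv.swap_apply_left] at this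
  set p : ℝ := Zn i0 i0 with hp
  set q : ℝ := Zn i0 i1 with hqdef
  set s : ℝ := Zn i1 i1 with hs
  have hZb := hZn.1
  have hp01 := hZb i0 i0
  have hq01 := hZb i0 i1
  have hs01 := hZb i1 i1
  have hsym : Zn i1 i0 = q := typicalTable_symm hZn i0 i1
  -- row sums
  have hrow0 : ∑ j, Zn i0 j = ((⌊B * C * (n:ℝ)⌋₊ : ℕ) : ℝ) := by
    rw [hZn.2.1.2.1 i0, hmarg0]
  have hrow1 : ∑ j, Zn i1 j = ((⌊C * (n:ℝ)⌋₊ : ℕ) : ℝ) := by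
    rw [hZn.2.1.2.1 i1, hmargbot i1 (le_refl m)]
  rw [Fin.sum_univ_add] at hrow0 hrow1
  have hconst0 : ∑ x : Fin n, Zn i0 (Fin.natAdd m x) = n * q := by
    rw [Finset.sum_congr rfl fun x _ => hq (Fin.natAdd m x) (Nat.le_add_right m x) i0,
      Finset.sum_const, Finset.card_univ, Fintype.card_fin, nsmul_eq_mul]
  have hconst1 : ∑ x : Fin n, Zn i1 (Fin.natAdd m x) = n * s := by
    rw [Finset.sum_congr rfl fun x _ => hq (Fin.natAdd m x) (Nat.le_add_right m x) i1,
      Finset.sum_const, Finset.card_univ, Fintype.card_fin, nsmul_eq_mul]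
  rw [hconst0] at hrow0
  rw [hconst1] at hrow1
  have hT0 : (0:ℝ) ≤ ∑ x : Fin m, Zn i0 (Fin.castAdd n x) :=
    Finset.sum_nonneg fun x _ => (hZb i0 _).1.le
  have hT1 : ∑ x : Fin m, Zn i1 (Fin.castAdd n x) ≤ (m : ℝ) := by
    calc ∑ x : Fin m, Zn i1 (Fin.castAdd n x) ≤ ∑ _x : Fin m, (1:ℝ) :=
          Finset.sum_le_sum fun x _ => (hZb i1 _).2.le
      _ = m := by simp
  -- q ≤ B * C
  have hqBC : q ≤ B * C := by
    have hfl : ((⌊B * C * (n:ℝ)⌋₊ : ℕ) : ℝ) ≤ B * C * n :=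
      Nat.floor_le (by positivity)
    have : n * q ≤ B * C * n := by linarith
    nlinarith
  -- s ≥ sn
  have hsge : sn ≤ s := by
    have hfl : C * (n:ℝ) < ((⌊C * (n:ℝ)⌋₊ : ℕ) : ℝ) + 1 := Nat.lt_floor_add_one _
    have h2 : C * n - 1 - m ≤ n * s := by linarith
    rw [hsndef, div_le_iff₀ hn0]
    linarith
  -- cycle relation
  have hcyc := typicalTable_cycle hZn i0 i1 i0 i1
  rw [hsym] at hcyc
  set K : ℝ := (1 - B * C) / (B * C) with hK
  have hK0 : 0 < K := div_pos (by linarith) (by positivity)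
  have hu0 : 0 < (1 - q) / q := div_pos (by linarith [hq01.2]) hq01.1
  have hKu : K ≤ (1 - q) / q := by
    rw [hK, div_le_div_iff₀ (by positivity) hq01.1]
    nlinarith [hq01.1]
  have hsn1 : sn < 1 := by
    rw [hsndef, div_lt_one hn0]
    have h1 : C * (n:ℝ) < 1 * n := mul_lt_mul_of_pos_right hC1 hn0
    have h2 : (0:ℝ) ≤ (m:ℝ) := Nat.cast_nonneg m
    linarith
  have hb0 : 0 < (1 - s) / s := div_pos (by linarith [hs01.2]) hs01.1
  have hbbn : (1 - s) / s ≤ (1 - sn) / sn := by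
    rw [div_le_div_iff₀ hs01.1 hsn]
    nlinarith
  have hK2 : K ^ 2 ≤ (1 - q) / q * ((1 - q) / q) := by nlinarith
  have ha : K ^ 2 ≤ (1 - p) / p * ((1 - s) / s) := by rw [hcyc]; exact hK2
  have ha0 : 0 < (1 - p) / p := div_pos (by linarith [hp01.2]) hp01.1
  have hG : K ^ 2 * (sn / (1 - sn)) ≤ (1 - p) / p := by
    have h1 : K ^ 2 ≤ (1 - p) / p * ((1 - sn) / sn) :=
      ha.trans (mul_le_mul_of_nonneg_left hbbn ha0.le)
    have h2 : (0:ℝ) < sn / (1 - sn) := div_pos hsn (by linarith)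
    calc K ^ 2 * (sn / (1 - sn)) ≤ ((1 - p) / p * ((1 - sn) / sn)) * (sn / (1 - sn)) :=
          mul_le_mul_of_nonneg_right h1 h2.le
      _ = (1 - p) / p := by
          have h3 : sn ≠ 0 := hsn.ne'
          have h4 : (1:ℝ) - sn ≠ 0 := by linarith
          have h5 : (1 - sn) / sn * (sn / (1 - sn)) = 1 := by field_simp
          rw [mul_assoc, h5, mul_one]
  have hfin : p ≤ 1 / (1 + K ^ 2 * (sn / (1 - sn))) := by
    have hnn : 0 ≤ K ^ 2 * (sn / (1 - sn)) :=
      mul_nonneg (sq_nonneg K) (div_nonneg hsn.le (by linarith))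
    have hGpos : 0 < 1 + K ^ 2 * (sn / (1 - sn)) := by linarith
    have h3 : K ^ 2 * (sn / (1 - sn)) * p ≤ 1 - p := by
      have h6 := (le_div_iff₀ hp01.1).mp hG
      linarith
    exact (le_div_iff₀ hGpos).mpr (by nlinarith [hp01.1, h3])
  have hentR : entR Zn 0 0 = p := by
    rw [entR, dif_pos (⟨by omega, by omega⟩ : 0 < m + n ∧ 0 < m + n)]
  rw [hentR]
  exact hfin

open Topology in
/-- Proposition 2.3: `limsup z₁₁ ≤ B²C`. -/
theorem typical_table_top_left_limsup
    (δ B C : ℝ) (hδ0 : 0 ≤ δ) (hδ1 : δ < 1) (hC0 : 0 < C) (hC1 : C < 1)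
    (hB0 : 0 < B) (hB1 : B ≤ 1 / C)
    (Z : ∀ n : ℕ, Fin (⌊(n : ℝ) ^ δ⌋₊ + n) → Fin (⌊(n : ℝ) ^ δ⌋₊ + n) → ℝ)
    (n₀ : ℕ) (hZ : ∀ n : ℕ, n₀ ≤ n → IsTypicalTable (marg n δ B C) (marg n δ B C) (Z n)) :
    Filter.limsup (fun n : ℕ => entR (Z n) 0 0) Filter.atTop ≤ B ^ 2 * C := by
  have hbounds : ∀ᶠ n : ℕ in atTop, 0 ≤ entR (Z n) 0 0 ∧ entR (Z n) 0 0 ≤ 1 := by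
    filter_upwards [eventually_ge_atTop n₀, eventually_ge_atTop 1] with n h1 h2
    have hpos : 0 < ⌊(n : ℝ) ^ δ⌋₊ + n := by omega
    have hb := (hZ n h1).1 ⟨0, hpos⟩ ⟨0, hpos⟩
    rw [show entR (Z n) 0 0 = Z n ⟨0, hpos⟩ ⟨0, hpos⟩ from dif_pos ⟨hpos, hpos⟩]
    exact ⟨hb.1.le, hb.2.le⟩
  have hcob : IsCoboundedUnder (· ≤ ·) atTop (fun n : ℕ => entR (Z n) 0 0) :=
    isCoboundedUnder_le_of_eventually_le atTop (x := 0) (hbounds.mono fun n h => h.1)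
  by_cases htriv : 1 ≤ B ^ 2 * C
  · refine le_trans (limsup_le_of_le hcob (hbounds.mono fun n h => h.2)) htriv
  push_neg at htriv
  have hBCle : B * C ≤ 1 := by
    rw [le_div_iff₀ hC0] at hB1
    exact hB1
  have hBC1 : B * C < 1 := by
    rcases lt_or_eq_of_le hBCle with h | h
    · exact h
    · exfalso
      have hB1' : 1 < B := by nlinarith
      nlinarith
  set K : ℝ := (1 - B * C) / (B * C) with hK
  set sfun : ℕ → ℝ := fun n => (C * n - 1 - (⌊(n : ℝ) ^ δ⌋₊ : ℝ)) / n with hsfun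
  set f : ℕ → ℝ := fun n => 1 / (1 + K ^ 2 * (sfun n / (1 - sfun n))) with hf
  -- sfun tends to C
  have hfloor_div : Tendsto (fun n : ℕ => (⌊(n : ℝ) ^ δ⌋₊ : ℝ) / n) atTop (𝓝 0) := by
    apply squeeze_zero' (Eventually.of_forall fun n => by positivity)
      (g := fun n : ℕ => (n : ℝ) ^ (δ - 1))
    · filter_upwards [eventually_ge_atTop 1] with n hn
      have hn0 : (0:ℝ) < n := by exact_mod_cast hn
      have h1 : (⌊(n : ℝ) ^ δ⌋₊ : ℝ) ≤ (n : ℝ) ^ δ :=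
        Nat.floor_le (Real.rpow_nonneg hn0.le δ)
      rw [Real.rpow_sub hn0, Real.rpow_one]
      gcongr
    · have h2 : Tendsto (fun x : ℝ => x ^ (-(1 - δ))) atTop (𝓝 0) :=
        tendsto_rpow_neg_atTop (by linarith)
      have h3 := h2.comp tendsto_natCast_atTop_atTop (α := ℕ)
      convert h3 using 2 with n
      simp [Function.comp, neg_sub]
  have hsC : Tendsto sfun atTop (𝓝 C) := by
    have h1 : Tendsto (fun n : ℕ => C - 1 / (n:ℝ) - (⌊(n : ℝ) ^ δ⌋₊ : ℝ) / n) atTop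
        (𝓝 (C - 0 - 0)) :=
      (tendsto_const_nhds.sub tendsto_one_div_atTop_nhds_zero_nat).sub hfloor_div
    rw [show C - 0 - 0 = C by ring] at h1
    apply h1.congr'
    filter_upwards [eventually_ge_atTop 1] with n hn
    have hn0 : (n:ℝ) ≠ 0 := by positivity
    simp only [hsfun]
    field_simp
  -- limit of f
  have hden_pos : 0 < 1 + K ^ 2 * (C / (1 - C)) := by
    have : 0 ≤ K ^ 2 * (C / (1 - C)) :=
      mul_nonneg (sq_nonneg K) (div_nonneg hC0.le (by linarith))
    linarith
  have hfL : Tendsto f atTop (𝓝 (1 / (1 + K ^ 2 * (C / (1 - C))))) := by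
    apply Tendsto.div tendsto_const_nhds _ hden_pos.ne'
    apply Tendsto.add tendsto_const_nhds
    apply Tendsto.mul tendsto_const_nhds
    exact hsC.div (tendsto_const_nhds.sub hsC) (by linarith : (0:ℝ) < 1 - C).ne'
  -- the limit is at most B²C
  have hLle : 1 / (1 + K ^ 2 * (C / (1 - C))) ≤ B ^ 2 * C := by
    rw [div_le_iff₀ hden_pos, hK]
    have h1C : (0:ℝ) < 1 - C := by linarith
    have hBC0 : (0:ℝ) < B * C := by positivity
    rw [div_pow]
    have key : (1 - C) * (1 - B ^ 2 * C) ≤ (1 - B * C) ^ 2 := by nlinarith [sq_nonneg (1 - B), mul_pos hB0 hC0]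
    have expand : B ^ 2 * C * (1 + (1 - B * C) ^ 2 / (B * C) ^ 2 * (C / (1 - C)))
        = B ^ 2 * C + (1 - B * C) ^ 2 / (1 - C) := by
      field_simp
    rw [expand]
    rw [← sub_nonneg]
    have : B ^ 2 * C + (1 - B * C) ^ 2 / (1 - C) - 1
        = ((1 - B * C) ^ 2 - (1 - C) * (1 - B ^ 2 * C)) / (1 - C) := by
      field_simp
      ring
    rw [this]
    exact div_nonneg (by linarith) h1C.le
  -- eventual bound
  have hev : ∀ᶠ n : ℕ in atTop, entR (Z n) 0 0 ≤ f n := by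
    have hspos : ∀ᶠ n : ℕ in atTop, 0 < sfun n :=
      hsC.eventually_mem (Ioi_mem_nhds hC0)
    filter_upwards [eventually_ge_atTop n₀, eventually_ge_atTop 1, hspos] with n h1 h2 h3
    have hm1 : 1 ≤ ⌊(n : ℝ) ^ δ⌋₊ := by
      apply Nat.le_floor
      rw [Nat.cast_one]
      exact Real.one_le_rpow (by exact_mod_cast h2) hδ0
    exact main_est B C hC0 hC1 hB0 hBC1 (⌊(n : ℝ) ^ δ⌋₊) n hm1 h2 (Z n) (hZ n h1) h3
  calc limsup (fun n : ℕ => entR (Z n) 0 0) atTop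
      ≤ limsup f atTop := limsup_le_limsup hev hcob hfL.isBoundedUnder_le
    _ = 1 / (1 + K ^ 2 * (C / (1 - C))) := hfL.limsup_eq
    _ ≤ B ^ 2 * C := hLle
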